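/- arXiv:math/0305239 — 2 statements merged into one kernel-verified Lean document; each statement's English description precedes it below -/
import Mathlib

section
/- For λ ∈ ℕⁿ, the induced module ind_{D_n}^{M_n} K_λ (induction of the one-dimensional D_n-module of character λ to the monoid M_n) is isomorphic, as a rational M_n-module, to the tensor product of symmetric powers S^λ E := S^{λ_1}E ⊗ ⋯ ⊗ S^{λ_n}E, where E = Kⁿ is the natural module. -/
/-!
STATEMENT 1: For `λ ∈ ℕⁿ` (an `n`-part composition of `r`), the induced module
`ind_{D_n}^{M_n} K_λ` is isomorphic, as a rational (left) `M_n`-module, to the tensor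
product of symmetric powers `S^λ E = S^{λ_1}E ⊗ ⋯ ⊗ S^{λ_n}E`, where `E = Kⁿ`.

We realize `ind_{D_n}^{M_n} K_λ` concretely as the subspace of the coordinate ring
`K[M_n] = MvPolynomial (Fin n × Fin n) K` of functions `f` with `f(t·x) = t^λ f(x)` for
all diagonal `t` (the right weight-`λ` space), with left `M_n`-action `(g·f)(x) = f(xg)`,
i.e. the substitution `c_{ij} ↦ Σ_k g_{kj} c_{ik}`.  `S^λ E` is realized as the
coinvariant space `E^{⊗r}/⟨v·σ − v : σ ∈ Σ_λ⟩` with the descended diagonal `M_n`-action.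
The isomorphism is asserted to intertwine the two `M_n`-actions.
-/

open scoped BigOperators

namespace SchurPaper

variable (K : Type*) [Field K] (n r : ℕ)

abbrev TSp := (Fin r → Fin n) → K

def wt (i : Fin r → Fin n) : Fin n → ℕ :=
  fun j => (Finset.univ.filter fun k => i k = j).card

def placePerm (σ : Equiv.Perm (Fin r)) : TSp K n r →ₗ[K] TSp K n r :=
  LinearMap.funLeft K K fun i => i ∘ σ

/-- The canonical multi-index `ℓ(μ)` of weight `μ`: `μ_1` entries `1`, then `μ_2`
entries `2`, etc. -/
def ellComp [NeZero n] (mu : Fin n → ℕ) (k : Fin r) : Fin n :=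
  if h : (Finset.univ.filter fun j : Fin n =>
      (k : ℕ) < ∑ i ∈ Finset.univ.filter (· ≤ j), mu i).Nonempty
  then Finset.min' _ h
  else ⟨0, Nat.pos_of_ne_zero (NeZero.ne n)⟩

/-- The subspace of relations defining the coinvariants
`S^μ E = E^{⊗r} / ⟨v·σ − v : σ ∈ Σ_μ⟩`, where `Σ_μ` is the Young subgroup (the stabilizer
of `ℓ(μ)`). -/
def Nsub [NeZero n] (mu : Fin n → ℕ) : Submodule K (TSp K n r) :=
  Submodule.span K
    {x | ∃ (σ : Equiv.Perm (Fin r)) (f : TSp K n r),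
      ellComp n r mu ∘ σ = ellComp n r mu ∧ x = placePerm K n r σ f - f}

/-- The generalized symmetric power `S^μ E`, realized as the coinvariants of `E^{⊗r}`
under the Young subgroup `Σ_μ`. -/
abbrev SymPow [NeZero n] (mu : Fin n → ℕ) := TSp K n r ⧸ Nsub K n r mu

/-- The (diagonal) action of a matrix `g ∈ M_n(K)` on `E^{⊗r}`. -/
noncomputable def glAct (g : Matrix (Fin n) (Fin n) K) : Module.End K (TSp K n r) :=
  Matrix.toLin' (Matrix.of fun i j : Fin r → Fin n => ∏ k, g (i k) (j k))


/-- The substitution `c_{ij} ↦ t_i · c_{ij}`, i.e. precomposition with left multiplication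
by the diagonal matrix `t`. -/
noncomputable def diagSubst (t : Fin n → K) :
    MvPolynomial (Fin n × Fin n) K →ₗ[K] MvPolynomial (Fin n × Fin n) K :=
  (MvPolynomial.aeval fun q : Fin n × Fin n => t q.1 • MvPolynomial.X q).toLinearMap

/-- `ind_{D_n}^{M_n} K_λ`: regular functions on `M_n` with `f(t·x) = t^λ f(x)` for all
diagonal `t`. -/
noncomputable def IndSp (lam : Fin n → ℕ) : Submodule K (MvPolynomial (Fin n × Fin n) K) where
  carrier := {p | ∀ t : Fin n → K, diagSubst K n t p = (∏ i, t i ^ lam i) • p}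
  add_mem' := by
    intro p q hp hq t
    rw [map_add, hp t, hq t, smul_add]
  zero_mem' := fun t => by simp
  smul_mem' := by
    intro c p hp t
    rw [map_smul, hp t, smul_comm]

/-- The left `M_n`-action on functions on `M_n`: `(g·f)(x) = f(xg)`, i.e. the substitution
`c_{ij} ↦ Σ_k g_{kj} c_{ik}`. -/
noncomputable def lAct (g : Matrix (Fin n) (Fin n) K) :
    MvPolynomial (Fin n × Fin n) K →ₗ[K] MvPolynomial (Fin n × Fin n) K :=
  (MvPolynomial.aeval fun q : Fin n × Fin n =>
    ∑ k, g k q.2 • MvPolynomial.X (q.1, k)).toLinearMap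

/-!
Send the basis tensor `e_j` of `E^{⊗r}` to the monomial `∏_k c_{ℓ(k), j(k)}` of `K[M_n]`,
where `ℓ = ℓ(λ)` takes each value `i` exactly `λ_i` times. Left multiplication by a diagonal
`t` scales a monomial by `t` raised to its row degrees, and since `K` is infinite distinct row
degrees give distinct characters; so the weight-`λ` functions are spanned by the monomials with
row degrees `λ`, which are exactly the images of the `e_j`. Two tensors `e_j`, `e_{j'}` give the
same monomial iff the pair sequences `(ℓ(k), j(k))` and `(ℓ(k), j'(k))` agree up to a
permutation `σ` of places, i.e. iff `j' = j ∘ σ` with `σ` in the Young subgroup `Σ_λ`; hence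
the kernel is precisely the span of the relations `v·σ − v` defining `S^λ E`. Substituting
`c_{ij} ↦ Σ_k g_{kj} c_{ik}` in a product of variables and expanding reproduces the diagonal
action of `g` on `E^{⊗r}`, so the induced isomorphism is `M_n`-equivariant.
-/

open MvPolynomial Finset

section TupleCount

variable {X : Type*} {r : ℕ}

noncomputable def tupleCount (g : Fin r → X) : X →₀ ℕ := ∑ k, Finsupp.single (g k) 1

lemma tupleCount_apply (g : Fin r → X) (x : X) :
    tupleCount g x = Nat.card {k // g k = x} := by
  classical
  rw [Nat.card_eq_fintype_card, Fintype.card_subtype, Finset.card_filter, tupleCount,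
    Finsupp.finsetSum_apply]
  simp only [Finsupp.single_apply]

lemma tupleCount_comp_perm (g : Fin r → X) (σ : Equiv.Perm (Fin r)) :
    tupleCount (g ∘ σ) = tupleCount g :=
  Equiv.sum_comp σ fun k => Finsupp.single (g k) 1

lemma exists_perm_of_tupleCount_eq {f g : Fin r → X} (h : tupleCount f = tupleCount g) :
    ∃ σ : Equiv.Perm (Fin r), f = g ∘ σ := by
  have hcard (x : X) : Nat.card {k // f k = x} = Nat.card {k // g k = x} := by
    rw [← tupleCount_apply, ← tupleCount_apply, h]
  let e (x : X) : {k // f k = x} ≃ {k // g k = x} := (Finite.card_eq.1 (hcard x)).some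
  exact ⟨Equiv.ofFiberEquiv e, funext fun k => (Equiv.ofFiberEquiv_map e k).symm⟩

lemma mapDomain_tupleCount {Y : Type*} (h : X → Y) (g : Fin r → X) :
    (tupleCount g).mapDomain h = tupleCount (h ∘ g) := by
  simp [tupleCount, Finsupp.mapDomain_finsetSum, Finsupp.mapDomain_single]

lemma degree_tupleCount (g : Fin r → X) : (tupleCount g).degree = r := by
  simp [tupleCount, Finsupp.degree_single]

lemma exists_tupleCount_eq [Fintype X] (m : X →₀ ℕ) (hm : m.degree = r) :
    ∃ g : Fin r → X, tupleCount g = m := by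
  classical
  have hcard : Fintype.card (Fin r) = Fintype.card (Σ x, Fin (m x)) := by
    simp [Fintype.card_sigma, ← hm, Finsupp.degree_eq_sum]
  let e : Fin r ≃ Σ x, Fin (m x) := Fintype.equivOfCardEq hcard
  refine ⟨fun k => (e k).1, Finsupp.ext fun x => ?_⟩
  rw [tupleCount_apply, Nat.card_congr ((e.subtypeEquiv fun _ => Iff.rfl).trans
    (Equiv.sigmaSubtype x)), Nat.card_eq_fintype_card, Fintype.card_fin]

lemma exists_tupleCount_prod_eq {Y : Type*} [Fintype X] [Fintype Y] (L : Fin r → X)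
    (m : X × Y →₀ ℕ) (hm : m.mapDomain Prod.fst = tupleCount L) :
    ∃ j : Fin r → Y, tupleCount (fun k => (L k, j k)) = m := by
  have hdeg : m.degree = r := by
    rw [← Finsupp.degree_mapDomain Prod.fst, hm, degree_tupleCount]
  obtain ⟨g, rfl⟩ := exists_tupleCount_eq m hdeg
  obtain ⟨σ, hσ⟩ := exists_perm_of_tupleCount_eq (hm.symm.trans (mapDomain_tupleCount _ g))
  refine ⟨Prod.snd ∘ g ∘ σ, ?_⟩
  rw [← tupleCount_comp_perm g σ, hσ]
  rfl

end TupleCount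

section EllComp

variable {n r : ℕ} [NeZero n] {lam : Fin n → ℕ}

lemma ellComp_le_iff (hlam : ∑ i, lam i = r) (k : Fin r) (i : Fin n) :
    ellComp n r lam k ≤ i ↔ (k : ℕ) < ∑ j ∈ Iic i, lam j := by
  have hmono {a b : Fin n} (hab : a ≤ b) : ∑ j ∈ Iic a, lam j ≤ ∑ j ∈ Iic b, lam j :=
    sum_le_sum_of_subset (Iic_subset_Iic.2 hab)
  have hne :
      (univ.filter fun j : Fin n => (k : ℕ) < ∑ i ∈ univ.filter (· ≤ j), lam i).Nonempty :=
    ⟨⊤, by simp [filter_ge_eq_Iic, hlam]⟩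
  rw [ellComp, dif_pos hne]
  constructor
  · intro h
    have hmin := mem_filter.1 (min'_mem _ hne)
    rw [filter_ge_eq_Iic] at hmin
    exact hmin.2.trans_le (hmono h)
  · intro h
    exact min'_le _ _ (by simpa [filter_ge_eq_Iic] using h)

lemma ellComp_lt_iff (hlam : ∑ i, lam i = r) (k : Fin r) (i : Fin n) :
    ellComp n r lam k < i ↔ (k : ℕ) < ∑ j ∈ Iio i, lam j := by
  constructor
  · intro h
    exact ((ellComp_le_iff hlam k _).1 le_rfl).trans_le
      (sum_le_sum_of_subset fun x hx => mem_Iio.2 ((mem_Iic.1 hx).trans_lt h))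
  · intro h
    have hi : 0 < (i : ℕ) := by
      by_contra! h0
      have : Iio i = ∅ := by
        ext x
        simp only [mem_Iio, Fin.lt_def, notMem_empty, iff_false]
        omega
      simp [this] at h
    let j : Fin n := ⟨i - 1, by omega⟩
    have hIio : Iio i = Iic j := by
      ext x
      simp only [mem_Iio, mem_Iic, Fin.lt_def, Fin.le_def, j]
      omega
    rw [hIio, ← ellComp_le_iff hlam, Fin.le_def] at h
    rw [Fin.lt_def]
    simp only [j] at h
    omega

lemma tupleCount_ellComp (hlam : ∑ i, lam i = r) :
    tupleCount (ellComp n r lam) = Finsupp.equivFunOnFinite.symm lam := by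
  have hsum_le (s : Finset (Fin n)) : ∑ j ∈ s, lam j ≤ r :=
    hlam ▸ sum_le_sum_of_subset (subset_univ s)
  ext i
  have hle : #{k | ellComp n r lam k ≤ i} = ∑ j ∈ Iic i, lam j := by
    simp_rw [ellComp_le_iff hlam]
    rw [Fin.card_filter_val_lt, min_eq_right (hsum_le _)]
  have hlt : #{k | ellComp n r lam k < i} = ∑ j ∈ Iio i, lam j := by
    simp_rw [ellComp_lt_iff hlam]
    rw [Fin.card_filter_val_lt, min_eq_right (hsum_le _)]
  have hsplit : #{k | ellComp n r lam k ≤ i}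
      = #{k | ellComp n r lam k < i} + #{k | ellComp n r lam k = i} := by
    rw [← card_union_of_disjoint (disjoint_filter.2 fun k _ h => h.ne), ← filter_or]
    simp_rw [le_iff_lt_or_eq]
  have hIic : ∑ j ∈ Iic i, lam j = ∑ j ∈ Iio i, lam j + lam i := by
    rw [← Iio_insert, sum_insert notMem_Iio_self, add_comm]
  rw [tupleCount_apply, Nat.card_eq_fintype_card, Fintype.card_subtype,
    Finsupp.coe_equivFunOnFinite_symm]
  omega

end EllComp

lemma _root_.Finsupp.eq_of_forall_prod_pow_eq {K σ : Type*} [Field K] [Infinite K]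
    {d d' : σ →₀ ℕ}
    (h : ∀ t : σ → K, (d.prod fun i e => t i ^ e) = d'.prod fun i e => t i ^ e) : d = d' :=
  monomial_left_injective (one_ne_zero (α := K)) <| MvPolynomial.funext fun t => by
    simp only [eval_monomial, one_mul, h]

section Weight

variable {K n}

lemma diagSubst_monomial (t : Fin n → K) (m : Fin n × Fin n →₀ ℕ) (c : K) :
    diagSubst K n t (monomial m c)
      = ((m.mapDomain Prod.fst).prod fun i e => t i ^ e) • monomial m c := by
  rw [diagSubst, AlgHom.toLinearMap_apply, aeval_monomial,
    Finsupp.prod_mapDomain_index (fun _ => pow_zero _) (fun _ _ _ => pow_add _ _ _),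
    monomial_eq]
  simp only [smul_pow, Finsupp.prod, Finset.prod_smul, algebraMap_eq, mul_smul_comm]

lemma coeff_diagSubst (t : Fin n → K) (p : MvPolynomial (Fin n × Fin n) K)
    (m : Fin n × Fin n →₀ ℕ) :
    coeff m (diagSubst K n t p)
      = ((m.mapDomain Prod.fst).prod fun i e => t i ^ e) * coeff m p := by
  induction p using MvPolynomial.induction_on' with
  | monomial m' c =>
    rw [diagSubst_monomial, coeff_smul, coeff_monomial, smul_eq_mul]
    split_ifs with h
    · rw [h]
    · rw [mul_zero, mul_zero]
  | add p q hp hq => rw [map_add, coeff_add, coeff_add, hp, hq, mul_add]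

lemma prod_pow_eq_finsupp_prod (lam : Fin n → ℕ) (t : Fin n → K) :
    ∏ i, t i ^ lam i = (Finsupp.equivFunOnFinite.symm lam).prod fun i e => t i ^ e := by
  rw [Finsupp.prod_fintype _ _ fun _ => pow_zero _]
  rfl

lemma monomial_mem_IndSp {lam : Fin n → ℕ} {m : Fin n × Fin n →₀ ℕ}
    (hm : m.mapDomain Prod.fst = Finsupp.equivFunOnFinite.symm lam) (c : K) :
    monomial m c ∈ IndSp K n lam := fun t => by
  rw [diagSubst_monomial, hm, prod_pow_eq_finsupp_prod]

lemma mapDomain_fst_of_mem_IndSp [Infinite K] {lam : Fin n → ℕ}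
    {p : MvPolynomial (Fin n × Fin n) K} (hp : p ∈ IndSp K n lam) {m : Fin n × Fin n →₀ ℕ}
    (hm : m ∈ p.support) : m.mapDomain Prod.fst = Finsupp.equivFunOnFinite.symm lam := by
  refine Finsupp.eq_of_forall_prod_pow_eq (K := K) fun t => ?_
  have hcoeff := congrArg (coeff m) (hp t)
  rw [coeff_diagSubst, coeff_smul, smul_eq_mul, prod_pow_eq_finsupp_prod] at hcoeff
  exact mul_right_cancel₀ (mem_support_iff.1 hm) hcoeff

end Weight

section CoordRing

variable {K n r}

lemma monomial_tupleCount {σ : Type*} (u : Fin r → σ) :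
    monomial (tupleCount u) (1 : K) = ∏ k, X (u k) :=
  monomial_sum_one _ _

variable (K) in
/-- `e_j ↦ ∏_k c_{L k, j k}`, the monomial being recorded by its exponent `tupleCount`. -/
noncomputable def toCoordRing (L : Fin r → Fin n) :
    TSp K n r →ₗ[K] MvPolynomial (Fin n × Fin n) K :=
  Fintype.linearCombination K fun j => monomial (tupleCount fun k => (L k, j k)) 1

lemma toCoordRing_apply (L : Fin r → Fin n) (f : TSp K n r) :
    toCoordRing K L f = ∑ j, f j • monomial (tupleCount fun k => (L k, j k)) 1 :=
  Fintype.linearCombination_apply _ _ _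

lemma toCoordRing_single (L j : Fin r → Fin n) (c : K) :
    toCoordRing K L (Pi.single j c) = monomial (tupleCount fun k => (L k, j k)) c := by
  rw [toCoordRing, Fintype.linearCombination_apply_single, smul_monomial, smul_eq_mul, mul_one]

lemma coeff_toCoordRing (L : Fin r → Fin n) (f : TSp K n r) (m : Fin n × Fin n →₀ ℕ) :
    coeff m (toCoordRing K L f) = ∑ j with tupleCount (fun k => (L k, j k)) = m, f j := by
  simp only [toCoordRing_apply, coeff_sum, coeff_smul, coeff_monomial, smul_eq_mul, mul_ite,
    mul_one, mul_zero, sum_ite, sum_const_zero, add_zero]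

lemma toCoordRing_mem_IndSp {L : Fin r → Fin n} {lam : Fin n → ℕ}
    (hL : tupleCount L = Finsupp.equivFunOnFinite.symm lam) (f : TSp K n r) :
    toCoordRing K L f ∈ IndSp K n lam := by
  rw [toCoordRing_apply]
  refine Submodule.sum_mem _ fun j _ => Submodule.smul_mem _ _ (monomial_mem_IndSp ?_ 1)
  rw [mapDomain_tupleCount]
  exact hL

lemma mem_range_toCoordRing [Infinite K] {L : Fin r → Fin n} {lam : Fin n → ℕ}
    (hL : tupleCount L = Finsupp.equivFunOnFinite.symm lam)
    {p : MvPolynomial (Fin n × Fin n) K} (hp : p ∈ IndSp K n lam) :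
    p ∈ LinearMap.range (toCoordRing K L) := by
  rw [← support_sum_monomial_coeff p]
  refine Submodule.sum_mem _ fun m hm => ?_
  obtain ⟨j, hj⟩ := exists_tupleCount_prod_eq L m (by rw [mapDomain_fst_of_mem_IndSp hp hm, hL])
  exact ⟨Pi.single j (coeff m p), by rw [toCoordRing_single, hj]⟩

lemma lAct_monomial_tupleCount (g : Matrix (Fin n) (Fin n) K) (L j : Fin r → Fin n) :
    lAct K n g (monomial (tupleCount fun k => (L k, j k)) 1)
      = ∑ i : Fin r → Fin n,
          (∏ k, g (i k) (j k)) • monomial (tupleCount fun k => (L k, i k)) 1 := by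
  simp only [monomial_tupleCount, lAct, AlgHom.toLinearMap_apply, map_prod, aeval_X]
  rw [prod_univ_sum, Fintype.piFinset_univ]
  simp only [Finset.prod_smul]

lemma glAct_apply (g : Matrix (Fin n) (Fin n) K) (f : TSp K n r) (i : Fin r → Fin n) :
    glAct K n r g f i = ∑ j, (∏ k, g (i k) (j k)) * f j :=
  rfl

lemma toCoordRing_glAct (L : Fin r → Fin n) (g : Matrix (Fin n) (Fin n) K) (f : TSp K n r) :
    toCoordRing K L (glAct K n r g f) = lAct K n g (toCoordRing K L f) := by
  simp only [toCoordRing_apply, glAct_apply, map_sum, map_smul, lAct_monomial_tupleCount,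
    Finset.sum_smul, Finset.smul_sum, smul_smul]
  rw [Finset.sum_comm]
  simp only [mul_comm]

end CoordRing

section Kernel

variable {K n r}

lemma mem_of_forall_sum_fiber_eq_zero {ι κ : Type*} [Fintype ι] [DecidableEq ι] [DecidableEq κ]
    (q : ι → κ) {N : Submodule K (ι → K)}
    (hN : ∀ i i', q i = q i' → Pi.single i (1 : K) - Pi.single i' 1 ∈ N) {f : ι → K}
    (hf : ∀ c, ∑ i with q i = c, f i = 0) : f ∈ N := by
  cases isEmpty_or_nonempty ι
  · rw [Subsingleton.elim f 0]
    exact N.zero_mem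
  let rep (i : ι) : ι := Function.invFun q (q i)
  have hrep (i : ι) : q (rep i) = q i := Function.invFun_eq ⟨i, rfl⟩
  have hreps : ∑ i, f i • (Pi.single (rep i) 1 : ι → K) = 0 := by
    rw [← sum_fiberwise_of_maps_to fun i _ => mem_image_of_mem q (mem_univ i)]
    refine sum_eq_zero fun c _ => ?_
    rw [sum_congr rfl fun i hi => by rw [show rep i = Function.invFun q c by
      rw [← (mem_filter.1 hi).2]], ← sum_smul, hf c, zero_smul]
  have hdiff : ∑ i, f i • (Pi.single i 1 - Pi.single (rep i) 1 : ι → K) ∈ N :=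
    N.sum_mem fun i _ => N.smul_mem _ (hN i (rep i) (hrep i).symm)
  simp_rw [smul_sub, sum_sub_distrib, hreps, sub_zero] at hdiff
  convert hdiff
  ext i
  simp [Finset.sum_apply, Pi.single_apply]

lemma placePerm_single (σ : Equiv.Perm (Fin r)) (j : Fin r → Fin n) (c : K) :
    placePerm K n r σ (Pi.single j c) = Pi.single (j ∘ σ.symm) c := by
  ext i
  simp only [placePerm, LinearMap.funLeft_apply, Pi.single_apply]
  congr 1
  exact propext ⟨fun h => by simp [← h, Function.comp_assoc],
    fun h => by simp [h, Function.comp_assoc]⟩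

lemma toCoordRing_placePerm {L : Fin r → Fin n} {σ : Equiv.Perm (Fin r)} (hσ : L ∘ σ = L)
    (f : TSp K n r) : toCoordRing K L (placePerm K n r σ f) = toCoordRing K L f := by
  suffices h : toCoordRing K L ∘ₗ placePerm K n r σ = toCoordRing K L from
    LinearMap.congr_fun h f
  refine LinearMap.pi_ext fun j c => ?_
  have hσ' : L ∘ σ.symm = L := funext fun k => by simpa using (congrFun hσ (σ.symm k)).symm
  rw [LinearMap.comp_apply, placePerm_single, toCoordRing_single, toCoordRing_single]
  conv_lhs => rw [← hσ']
  exact congrArg (monomial · c) (tupleCount_comp_perm (fun k => (L k, j k)) σ.symm)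

variable [NeZero n] {lam : Fin n → ℕ}

lemma single_sub_single_mem_Nsub {j j' : Fin r → Fin n}
    (h : tupleCount (fun k => (ellComp n r lam k, j k))
      = tupleCount fun k => (ellComp n r lam k, j' k)) :
    Pi.single j (1 : K) - Pi.single j' 1 ∈ Nsub K n r lam := by
  obtain ⟨σ, hσ⟩ := exists_perm_of_tupleCount_eq h
  have hL : ellComp n r lam ∘ σ.symm = ellComp n r lam :=
    funext fun k => by simpa using congrArg Prod.fst (congrFun hσ (σ.symm k))
  have hj : j' ∘ σ = j := funext fun k => (congrArg Prod.snd (congrFun hσ k)).symm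
  refine Submodule.subset_span ⟨σ.symm, Pi.single j' 1, hL, ?_⟩
  rw [placePerm_single, σ.symm_symm, hj]

lemma ker_toCoordRing_ellComp :
    LinearMap.ker (toCoordRing K (ellComp n r lam)) = Nsub K n r lam := by
  apply le_antisymm
  · intro f hf
    refine mem_of_forall_sum_fiber_eq_zero
      (fun j => tupleCount fun k => (ellComp n r lam k, j k))
      (fun _ _ h => single_sub_single_mem_Nsub h) fun m => ?_
    rw [← coeff_toCoordRing, LinearMap.mem_ker.1 hf, coeff_zero]
  · rw [Nsub, Submodule.span_le]
    rintro _ ⟨σ, f, hσ, rfl⟩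
    rw [SetLike.mem_coe, LinearMap.mem_ker, map_sub, toCoordRing_placePerm hσ, sub_self]

end Kernel

theorem ind_iso_symPow [Infinite K] [NeZero n]
    (lam : Fin n → ℕ) (hlam : ∑ i, lam i = r) :
    ∃ e : ↥(IndSp K n lam) ≃ₗ[K] SymPow K n r lam,
      ∀ (g : Matrix (Fin n) (Fin n) K) (v w : ↥(IndSp K n lam)),
        ((w : MvPolynomial (Fin n × Fin n) K)
            = lAct K n g (v : MvPolynomial (Fin n × Fin n) K)) →
        ∀ y : Module.End K (SymPow K n r lam),
          (∀ t : TSp K n r,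
            y (Submodule.Quotient.mk t) = Submodule.Quotient.mk (glAct K n r g t)) →
          e w = y (e v) := by
  have hL := tupleCount_ellComp hlam
  let Φ := (toCoordRing K (ellComp n r lam)).codRestrict _ (toCoordRing_mem_IndSp hL)
  have hΦ : Function.Surjective Φ := fun p => by
    obtain ⟨f, hf⟩ := mem_range_toCoordRing hL p.2
    exact ⟨f, Subtype.ext hf⟩
  let E : SymPow K n r lam ≃ₗ[K] IndSp K n lam :=
    (Submodule.quotEquivOfEq _ _ (by rw [LinearMap.ker_codRestrict, ker_toCoordRing_ellComp])
      ).trans (Φ.quotKerEquivOfSurjective hΦ)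
  have hE (t : TSp K n r) : E (Submodule.Quotient.mk t) = Φ t := rfl
  refine ⟨E.symm, fun g v w hw y hy => ?_⟩
  obtain ⟨t, ht⟩ := Submodule.mkQ_surjective _ (E.symm v)
  have hv : v = Φ t := by rw [← hE, ← Submodule.mkQ_apply, ht, E.apply_symm_apply]
  have hw' : w = E (Submodule.Quotient.mk (glAct K n r g t)) := Subtype.ext <| by
    rw [hE, hw, hv, LinearMap.codRestrict_apply, LinearMap.codRestrict_apply, toCoordRing_glAct]
  rw [hw', E.symm_apply_apply, ← hy, ← ht, Submodule.mkQ_apply]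

end SchurPaper
end

section
/- For λ, μ ∈ Λ(n,r), the number of n×n matrices over ℕ with row sums λ and column sums μ equals the number of pairs (S,T) where S is a semistandard tableau of weight λ and T a semistandard tableau of weight μ, both of the same dominant (partition) shape ν with ν a partition of r into at most n parts. -/
/-!
The bijection is RSK in the form of Fomin's growth diagrams; a partition is encoded by its row
lengths, an antitone function `ℕ → ℕ`. Krattenthaler's local rule fills the grid `[0, n]²` with
partitions, starting from empty ones on the first row and column, so that the partition at
`(i + 1, j + 1)` is determined by the three partitions around it and the entry `A i j`. Every step
down or to the right adds a horizontal strip, and along the last column the step from row `i` to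
row `i + 1` adds `∑ j, A i j` cells. So the last column is a chain of horizontal strips with sizes
the row sums, that is, a semistandard tableau of weight `λ`, and likewise the last row is one of
weight `μ` with the same final shape. The local rule can be run backwards, so the whole diagram,
and with it `A`, is recovered from its last row and column.
-/

open Finset

namespace RSK

/-! ### Horizontal strips and the local rule -/

def VanishesFrom (s : ℕ) (f : ℕ → ℕ) : Prop := ∀ k, s ≤ k → f k = 0

theorem VanishesFrom.sum_range_eq {s N : ℕ} {f : ℕ → ℕ} (hf : VanishesFrom s f) (h : s ≤ N) :
    ∑ k ∈ range N, f k = ∑ k ∈ range s, f k :=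
  (sum_subset (range_subset_range.mpr h) fun k _ hks => hf k (by simpa using hks)).symm

structure IsHorizontalStrip (a b : ℕ → ℕ) : Prop where
  le : ∀ k, a k ≤ b k
  succ_le : ∀ k, b (k + 1) ≤ a k

theorem IsHorizontalStrip.antitone {a b : ℕ → ℕ} (h : IsHorizontalStrip a b) : Antitone b :=
  antitone_nat_of_succ_le fun k => (h.succ_le k).trans (h.le k)

theorem isHorizontalStrip_self {a : ℕ → ℕ} (ha : Antitone a) : IsHorizontalStrip a a :=
  ⟨fun _ => le_rfl, fun k => ha (Nat.le_add_right k 1)⟩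

theorem isHorizontalStrip_zero : IsHorizontalStrip 0 0 :=
  isHorizontalStrip_self antitone_const

/-- Krattenthaler's local rule for RSK: the partition at the corner `(i + 1, j + 1)` of a cell
with entry `x`, from the partitions `ρ`, `μ`, `ν` at its corners `(i, j)`, `(i + 1, j)`,
`(i, j + 1)`. -/
def growStep (ρ μ ν : ℕ → ℕ) (x : ℕ) : ℕ → ℕ
  | 0 => max (μ 0) (ν 0) + x
  | k + 1 => max (μ (k + 1)) (ν (k + 1)) + min (μ k) (ν k) - ρ k

def shrinkStep (κ μ ν : ℕ → ℕ) (k : ℕ) : ℕ :=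
  min (μ k) (ν k) + max (μ (k + 1)) (ν (k + 1)) - κ (k + 1)

def shrinkEntry (κ μ ν : ℕ → ℕ) : ℕ := κ 0 - max (μ 0) (ν 0)

section LocalRules

variable {ρ κ μ ν : ℕ → ℕ} {x : ℕ}

theorem growStep_comm (ρ μ ν : ℕ → ℕ) (x : ℕ) : growStep ρ μ ν x = growStep ρ ν μ x := by
  funext k
  cases k <;> simp only [growStep, max_comm, min_comm]

theorem isHorizontalStrip_growStep (hμ : IsHorizontalStrip ρ μ) (hν : IsHorizontalStrip ρ ν) :
    IsHorizontalStrip μ (growStep ρ μ ν x) := by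
  constructor
  · rintro (_ | k)
    · simp only [growStep]; omega
    · have := hμ.le k; have := hν.le k
      simp only [growStep]; omega
  · intro k
    have := hμ.succ_le k; have := hν.succ_le k
    simp only [growStep]; omega

theorem VanishesFrom.growStep {s : ℕ} (hμ : VanishesFrom (s + 1) μ) (hν : VanishesFrom s ν) :
    VanishesFrom (s + 1) (growStep ρ μ ν x) := by
  rintro (_ | k) hk
  · omega
  · have := hμ (k + 1) (by omega); have := hν (k + 1) (by omega); have := hν k (by omega)
    simp only [RSK.growStep]; omega

theorem shrinkStep_growStep (hμ : IsHorizontalStrip ρ μ) (hν : IsHorizontalStrip ρ ν) :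
    shrinkStep (growStep ρ μ ν x) μ ν = ρ := by
  funext k
  have := hμ.succ_le k; have := hν.succ_le k; have := hμ.le k; have := hν.le k
  simp only [shrinkStep, growStep]; omega

theorem shrinkEntry_growStep : shrinkEntry (growStep ρ μ ν x) μ ν = x := by
  simp only [shrinkEntry, growStep]; omega

theorem growStep_shrinkStep (hμ : IsHorizontalStrip μ κ) (hν : IsHorizontalStrip ν κ) :
    growStep (shrinkStep κ μ ν) μ ν (shrinkEntry κ μ ν) = κ := by
  funext k
  rcases k with _ | k
  · have := hμ.le 0; have := hν.le 0
    simp only [growStep, shrinkEntry]; omega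
  · have := hμ.le (k + 1); have := hν.le (k + 1); have := hμ.succ_le k; have := hν.succ_le k
    simp only [growStep, shrinkStep]; omega

theorem shrinkStep_comm (κ μ ν : ℕ → ℕ) : shrinkStep κ μ ν = shrinkStep κ ν μ := by
  funext k
  simp only [shrinkStep, max_comm, min_comm]

theorem isHorizontalStrip_shrinkStep (hμ : IsHorizontalStrip μ κ) (hν : IsHorizontalStrip ν κ) :
    IsHorizontalStrip (shrinkStep κ μ ν) μ := by
  constructor
  · intro k
    have := hμ.le (k + 1); have := hν.le (k + 1); have := hμ.succ_le k; have := hν.succ_le k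
    simp only [shrinkStep]; omega
  · intro k
    have := hμ.le (k + 1); have := hν.le (k + 1); have := hμ.succ_le k; have := hν.succ_le k
    simp only [shrinkStep]; omega

theorem sum_range_growStep (hμ : IsHorizontalStrip ρ μ) (hν : IsHorizontalStrip ρ ν) (N : ℕ) :
    ∑ k ∈ range (N + 1), growStep ρ μ ν x k + ∑ k ∈ range N, ρ k + min (μ N) (ν N)
      = ∑ k ∈ range (N + 1), μ k + ∑ k ∈ range (N + 1), ν k + x := by
  induction N with
  | zero => simp only [growStep, zero_add, sum_range_one, sum_range_zero]; omega
  | succ N ih =>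
    have hκ : growStep ρ μ ν x (N + 1) = max (μ (N + 1)) (ν (N + 1)) + min (μ N) (ν N) - ρ N :=
      rfl
    have := hμ.le N; have := hν.le N
    rw [sum_range_succ _ (N + 1), sum_range_succ ρ, sum_range_succ μ (N + 1),
      sum_range_succ ν (N + 1)]
    omega

end LocalRules

/-! ### Growth diagrams -/

def grow (A : ℕ → ℕ → ℕ) : ℕ → ℕ → ℕ → ℕ
  | 0, _ => 0
  | _ + 1, 0 => 0
  | i + 1, j + 1 => growStep (grow A i j) (grow A (i + 1) j) (grow A i (j + 1)) (A i j)

section GrowthDiagram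

variable (A : ℕ → ℕ → ℕ)

@[simp] theorem grow_zero_left (j : ℕ) : grow A 0 j = 0 := by
  rw [grow]

@[simp] theorem grow_zero_right (i : ℕ) : grow A i 0 = 0 := by
  cases i <;> rw [grow]

theorem grow_succ_succ (i j : ℕ) :
    grow A (i + 1) (j + 1)
      = growStep (grow A i j) (grow A (i + 1) j) (grow A i (j + 1)) (A i j) := by
  rw [grow]

theorem grow_swap : ∀ i j, grow (Function.swap A) j i = grow A i j
  | 0, j => by simp
  | i + 1, 0 => by simp
  | i + 1, j + 1 => by
    rw [grow_succ_succ, grow_succ_succ, grow_swap i j, grow_swap (i + 1) j, grow_swap i (j + 1),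
      growStep_comm]

end GrowthDiagram

-- A horizontal edge of the diagram is a vertical edge of the diagram of the transpose.
theorem isHorizontalStrip_grow_succ_left {A : ℕ → ℕ → ℕ} :
    ∀ i j, IsHorizontalStrip (grow A i j) (grow A (i + 1) j)
  | i, 0 => by simpa using isHorizontalStrip_zero
  | i, j + 1 => by
    have hμ := isHorizontalStrip_grow_succ_left (A := A) i j
    have hν : IsHorizontalStrip (grow A i j) (grow A i (j + 1)) := by
      simpa only [grow_swap] using isHorizontalStrip_grow_succ_left (A := Function.swap A) j i
    rw [grow_succ_succ, growStep_comm]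
    exact isHorizontalStrip_growStep hν hμ
termination_by i j => i + j

section GrowthDiagramStrips

variable {A : ℕ → ℕ → ℕ}

theorem isHorizontalStrip_grow_succ_right (i j : ℕ) :
    IsHorizontalStrip (grow A i j) (grow A i (j + 1)) := by
  simpa only [grow_swap] using isHorizontalStrip_grow_succ_left (A := Function.swap A) j i

theorem vanishesFrom_grow_left : ∀ i j, VanishesFrom i (grow A i j)
  | 0, _ => by simp [VanishesFrom]
  | _ + 1, 0 => by simp [VanishesFrom]
  | i + 1, j + 1 => by
    rw [grow_succ_succ]
    exact (vanishesFrom_grow_left (i + 1) j).growStep (vanishesFrom_grow_left i (j + 1))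

theorem sum_row_add_sum_grow (i J : ℕ) :
    ∑ j ∈ range J, A i j + ∑ k ∈ range i, grow A i J k
      = ∑ k ∈ range (i + 1), grow A (i + 1) J k := by
  induction J with
  | zero => simp
  | succ J ih =>
    have key := sum_range_growStep (x := A i J) (isHorizontalStrip_grow_succ_left (A := A) i J)
      (isHorizontalStrip_grow_succ_right i J) i
    have hν := vanishesFrom_grow_left (A := A) i (J + 1) i le_rfl
    rw [← grow_succ_succ, hν, _root_.min_zero, sum_range_succ (grow A i (J + 1)), hν] at key
    rw [sum_range_succ]
    omega

end GrowthDiagramStrips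

theorem sum_row_add_sum_grow_of_lt {A : ℕ → ℕ → ℕ} {i n : ℕ} (hi : i < n) (J : ℕ) :
    ∑ j ∈ range J, A i j + ∑ k ∈ range n, grow A i J k = ∑ k ∈ range n, grow A (i + 1) J k := by
  rw [(vanishesFrom_grow_left i J).sum_range_eq hi.le,
    (vanishesFrom_grow_left (i + 1) J).sum_range_eq hi]
  exact sum_row_add_sum_grow i J

theorem sum_col_add_sum_grow_of_lt {A : ℕ → ℕ → ℕ} {j n : ℕ} (hj : j < n) (I : ℕ) :
    ∑ i ∈ range I, A i j + ∑ k ∈ range n, grow A I j k = ∑ k ∈ range n, grow A I (j + 1) k := by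
  simpa only [grow_swap] using sum_row_add_sum_grow_of_lt (A := Function.swap A) hj I

theorem grow_congr {A B : ℕ → ℕ → ℕ} :
    ∀ i j, (∀ i' < i, ∀ j' < j, A i' j' = B i' j') → grow A i j = grow B i j
  | 0, _, _ => by simp
  | _ + 1, 0, _ => by simp
  | i + 1, j + 1, h => by
    rw [grow_succ_succ, grow_succ_succ, h i i.lt_succ_self j j.lt_succ_self,
      grow_congr i j fun i' hi j' hj => h i' (by omega) j' (by omega),
      grow_congr (i + 1) j fun i' hi j' hj => h i' hi j' (by omega),
      grow_congr i (j + 1) fun i' hi j' hj => h i' (by omega) j' hj]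

-- The growth diagram on `[0, n]²` rebuilt from its last column `c` and its last row `d`.
def ungrow (c d : ℕ → ℕ → ℕ) (n i j : ℕ) : ℕ → ℕ :=
  if h : i < n ∧ j < n then
    shrinkStep (ungrow c d n (i + 1) (j + 1)) (ungrow c d n (i + 1) j) (ungrow c d n i (j + 1))
  else if i < n then c i else d j
termination_by (n - i) + (n - j)

section Ungrow

variable {c d : ℕ → ℕ → ℕ} {n i j : ℕ}

theorem ungrow_of_lt (hi : i < n) (hj : j < n) :
    ungrow c d n i j = shrinkStep (ungrow c d n (i + 1) (j + 1)) (ungrow c d n (i + 1) j)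
      (ungrow c d n i (j + 1)) := by
  rw [ungrow, dif_pos ⟨hi, hj⟩]

theorem ungrow_of_le_right (hi : i < n) (hj : n ≤ j) : ungrow c d n i j = c i := by
  rw [ungrow, dif_neg (by omega), if_pos hi]

theorem ungrow_of_le_left (hi : n ≤ i) : ungrow c d n i j = d j := by
  rw [ungrow, dif_neg (by omega), if_neg (by omega)]

theorem ungrow_right (hcd : c n = d n) (hi : i ≤ n) : ungrow c d n i n = c i := by
  rcases hi.lt_or_eq with hi | rfl
  · exact ungrow_of_le_right hi le_rfl
  · rw [ungrow_of_le_left le_rfl, hcd]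

variable (hc : ∀ t < n, IsHorizontalStrip (c t) (c (t + 1)))
  (hd : ∀ t < n, IsHorizontalStrip (d t) (d (t + 1))) (hcd : c n = d n)
include hc hd hcd

theorem isHorizontalStrip_ungrow {i j : ℕ} (hi : i ≤ n) (hj : j ≤ n) :
    (i < n → IsHorizontalStrip (ungrow c d n i j) (ungrow c d n (i + 1) j)) ∧
      (j < n → IsHorizontalStrip (ungrow c d n i j) (ungrow c d n i (j + 1))) := by
  by_cases h : i < n ∧ j < n
  · have hμ := (isHorizontalStrip_ungrow (i := i + 1) (j := j) h.1 hj).2 h.2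
    have hν := (isHorizontalStrip_ungrow (i := i) (j := j + 1) hi h.2).1 h.1
    rw [ungrow_of_lt h.1 h.2]
    refine ⟨fun _ => isHorizontalStrip_shrinkStep hμ hν, fun _ => ?_⟩
    rw [shrinkStep_comm]
    exact isHorizontalStrip_shrinkStep hν hμ
  · refine ⟨fun hi' => ?_, fun hj' => ?_⟩
    · rw [show j = n by omega, ungrow_right hcd hi, ungrow_right hcd hi']
      exact hc i hi'
    · rw [show i = n by omega, ungrow_of_le_left le_rfl, ungrow_of_le_left le_rfl]
      exact hd j hj'
termination_by (n - i) + (n - j)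

theorem isHorizontalStrip_ungrow_succ_left {i j : ℕ} (hi : i < n) (hj : j ≤ n) :
    IsHorizontalStrip (ungrow c d n i j) (ungrow c d n (i + 1) j) :=
  (isHorizontalStrip_ungrow hc hd hcd hi.le hj).1 hi

theorem isHorizontalStrip_ungrow_succ_right {i j : ℕ} (hi : i ≤ n) (hj : j < n) :
    IsHorizontalStrip (ungrow c d n i j) (ungrow c d n i (j + 1)) :=
  (isHorizontalStrip_ungrow hc hd hcd hi hj.le).2 hj

theorem ungrow_zero_left (hc0 : c 0 = 0) (hj : j ≤ n) : ungrow c d n 0 j = 0 := by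
  induction hj using Nat.decreasingInduction with
  | self => rw [ungrow_right hcd (Nat.zero_le n), hc0]
  | of_succ j hj ih =>
    funext k
    have := (isHorizontalStrip_ungrow_succ_right hc hd hcd (Nat.zero_le n) hj).le k
    rw [ih] at this
    exact Nat.le_zero.mp this

theorem ungrow_zero_right (hd0 : d 0 = 0) (hi : i ≤ n) : ungrow c d n i 0 = 0 := by
  induction hi using Nat.decreasingInduction with
  | self => rw [ungrow_of_le_left le_rfl, hd0]
  | of_succ i hi ih =>
    funext k
    have := (isHorizontalStrip_ungrow_succ_left hc hd hcd hi (Nat.zero_le n)).le k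
    rw [ih] at this
    exact Nat.le_zero.mp this

end Ungrow

def ungrowEntry (c d : ℕ → ℕ → ℕ) (n i j : ℕ) : ℕ :=
  shrinkEntry (ungrow c d n (i + 1) (j + 1)) (ungrow c d n (i + 1) j) (ungrow c d n i (j + 1))

theorem grow_ungrowEntry {c d : ℕ → ℕ → ℕ} {n : ℕ}
    (hc : ∀ t < n, IsHorizontalStrip (c t) (c (t + 1)))
    (hd : ∀ t < n, IsHorizontalStrip (d t) (d (t + 1))) (hcd : c n = d n)
    (hc0 : c 0 = 0) (hd0 : d 0 = 0) :
    ∀ i j, i ≤ n → j ≤ n → grow (ungrowEntry c d n) i j = ungrow c d n i j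
  | 0, j, _, hj => by rw [grow_zero_left, ungrow_zero_left hc hd hcd hc0 hj]
  | i + 1, 0, hi, _ => by rw [grow_zero_right, ungrow_zero_right hc hd hcd hd0 hi]
  | i + 1, j + 1, hi, hj => by
    rw [grow_succ_succ, grow_ungrowEntry hc hd hcd hc0 hd0 i j (by omega) (by omega),
      grow_ungrowEntry hc hd hcd hc0 hd0 (i + 1) j hi (by omega),
      grow_ungrowEntry hc hd hcd hc0 hd0 i (j + 1) (by omega) hj,
      ungrow_of_lt (by omega) (by omega)]
    exact growStep_shrinkStep (isHorizontalStrip_ungrow_succ_right hc hd hcd hi (by omega))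
      (isHorizontalStrip_ungrow_succ_left hc hd hcd (by omega) hj)

def rowChain (A : ℕ → ℕ → ℕ) (n : ℕ) : ℕ → ℕ → ℕ := fun i => grow A (min i n) n

def colChain (A : ℕ → ℕ → ℕ) (n : ℕ) : ℕ → ℕ → ℕ := fun j => grow A n (min j n)

theorem ungrow_rowChain_colChain (A : ℕ → ℕ → ℕ) (n i j : ℕ) (hi : i ≤ n) (hj : j ≤ n) :
    ungrow (rowChain A n) (colChain A n) n i j = grow A i j := by
  by_cases h : i < n ∧ j < n
  · rw [ungrow_of_lt h.1 h.2, ungrow_rowChain_colChain A n (i + 1) (j + 1) (by omega) (by omega),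
      ungrow_rowChain_colChain A n (i + 1) j (by omega) hj,
      ungrow_rowChain_colChain A n i (j + 1) hi (by omega), grow_succ_succ]
    exact shrinkStep_growStep (isHorizontalStrip_grow_succ_left i j)
      (isHorizontalStrip_grow_succ_right i j)
  · rcases (show i = n ∨ i < n ∧ j = n by omega) with rfl | ⟨hi, rfl⟩
    · rw [ungrow_of_le_left le_rfl, colChain, min_eq_left hj]
    · rw [ungrow_of_le_right hi le_rfl, rowChain, min_eq_left hi.le]
termination_by (n - i) + (n - j)

theorem ungrowEntry_rowChain_colChain (A : ℕ → ℕ → ℕ) {n i j : ℕ} (hi : i < n) (hj : j < n) :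
    ungrowEntry (rowChain A n) (colChain A n) n i j = A i j := by
  rw [ungrowEntry, ungrow_rowChain_colChain A n _ _ hi hj,
    ungrow_rowChain_colChain A n _ _ hi hj.le, ungrow_rowChain_colChain A n _ _ hi.le hj,
    grow_succ_succ, shrinkEntry_growStep]

/-! ### Matrices and pairs of strip chains -/

/-- `c t` is the shape formed by the entries `< t` of a semistandard tableau with entries `< n`
and weight `w`. -/
structure IsStripChain (n : ℕ) (w : Fin n → ℕ) (c : ℕ → ℕ → ℕ) : Prop where
  zero : c 0 = 0
  strip : ∀ t < n, IsHorizontalStrip (c t) (c (t + 1))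
  size : ∀ t : Fin n, ∑ k ∈ range n, c (t + 1) k = ∑ k ∈ range n, c t k + w t
  const : ∀ t, n ≤ t → c t = c n

namespace IsStripChain

variable {n : ℕ} {w : Fin n → ℕ} {c : ℕ → ℕ → ℕ} (hc : IsStripChain n w c)
include hc

theorem antitone_self : Antitone (c n) := by
  rcases n with _ | n
  · rw [hc.zero]
    exact antitone_const
  · exact (hc.strip n n.lt_succ_self).antitone

theorem isHorizontalStrip (t : ℕ) : IsHorizontalStrip (c t) (c (t + 1)) := by
  by_cases ht : t < n
  · exact hc.strip t ht
  · rw [hc.const t (by omega), hc.const (t + 1) (by omega)]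
    exact isHorizontalStrip_self hc.antitone_self

theorem antitone : ∀ t, Antitone (c t)
  | 0 => by rw [hc.zero]; exact antitone_const
  | t + 1 => (hc.isHorizontalStrip t).antitone

theorem monotone : Monotone c :=
  monotone_nat_of_le_succ fun t => (hc.isHorizontalStrip t).le

theorem vanishesFrom_self : ∀ t, VanishesFrom t (c t)
  | 0, k, _ => by rw [hc.zero]; rfl
  | t + 1, k + 1, hk => Nat.le_zero.mp <|
      ((hc.isHorizontalStrip t).succ_le k).trans_eq (vanishesFrom_self t k (by omega))

theorem eq_min (t : ℕ) : c (min t n) = c t := by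
  rcases le_total t n with h | h
  · rw [min_eq_left h]
  · rw [min_eq_right h, hc.const t h]

end IsStripChain

def extendByZero {n : ℕ} (A : Matrix (Fin n) (Fin n) ℕ) (i j : ℕ) : ℕ :=
  if h : i < n ∧ j < n then A ⟨i, h.1⟩ ⟨j, h.2⟩ else 0

@[simp] theorem extendByZero_apply {n : ℕ} (A : Matrix (Fin n) (Fin n) ℕ) (i j : Fin n) :
    extendByZero A i j = A i j := by
  simp [extendByZero]

theorem sum_extendByZero_row {n : ℕ} (A : Matrix (Fin n) (Fin n) ℕ) (i : Fin n) :
    ∑ j ∈ range n, extendByZero A i j = ∑ j, A i j := by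
  simp [← Fin.sum_univ_eq_sum_range]

theorem sum_extendByZero_col {n : ℕ} (A : Matrix (Fin n) (Fin n) ℕ) (j : Fin n) :
    ∑ i ∈ range n, extendByZero A i j = ∑ i, A i j := by
  simp [← Fin.sum_univ_eq_sum_range (fun i => extendByZero A i j)]

theorem grow_extendByZero_of {n i j : ℕ} (E : ℕ → ℕ → ℕ) (hi : i ≤ n) (hj : j ≤ n) :
    grow (extendByZero (Matrix.of fun i j : Fin n => E i j)) i j = grow E i j :=
  grow_congr i j fun i' hi' j' hj' => by
    simp [extendByZero, show i' < n by omega, show j' < n by omega]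

section MatrixChains

variable {n : ℕ} {w : Fin n → ℕ}

theorem isStripChain_rowChain {A : ℕ → ℕ → ℕ} (h : ∀ t : Fin n, ∑ j ∈ range n, A t j = w t) :
    IsStripChain n w (rowChain A n) where
  zero := by simp [rowChain]
  strip t ht := by
    simpa only [rowChain, min_eq_left ht.le, min_eq_left (Nat.add_one_le_of_lt ht)] using
      isHorizontalStrip_grow_succ_left t n
  size t := by
    simp only [rowChain, min_eq_left t.isLt.le, min_eq_left (Nat.add_one_le_of_lt t.isLt)]
    rw [← sum_row_add_sum_grow_of_lt t.isLt, h t, add_comm]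
  const t ht := by simp only [rowChain, min_eq_right ht, min_self]

theorem colChain_eq_rowChain_swap (A : ℕ → ℕ → ℕ) (n : ℕ) :
    colChain A n = rowChain (Function.swap A) n :=
  funext fun _ => (grow_swap A _ _).symm

theorem isStripChain_colChain {A : ℕ → ℕ → ℕ} (h : ∀ t : Fin n, ∑ i ∈ range n, A i t = w t) :
    IsStripChain n w (colChain A n) := by
  rw [colChain_eq_rowChain_swap]
  exact isStripChain_rowChain h

variable {w' : Fin n → ℕ} {c d : ℕ → ℕ → ℕ}
  (hc : IsStripChain n w c) (hd : IsStripChain n w' d) (hcd : c n = d n)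
include hc hd hcd

theorem grow_ungrowEntry_of_isStripChain {i j : ℕ} (hi : i ≤ n) (hj : j ≤ n) :
    grow (ungrowEntry c d n) i j = ungrow c d n i j :=
  grow_ungrowEntry hc.strip hd.strip hcd hc.zero hd.zero i j hi hj

theorem sum_ungrowEntry_row (t : Fin n) : ∑ j ∈ range n, ungrowEntry c d n t j = w t := by
  have key := sum_row_add_sum_grow_of_lt (A := ungrowEntry c d n) t.isLt n
  rw [grow_ungrowEntry_of_isStripChain hc hd hcd t.isLt.le le_rfl,
    grow_ungrowEntry_of_isStripChain hc hd hcd t.isLt le_rfl, ungrow_right hcd t.isLt.le,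
    ungrow_right hcd t.isLt, hc.size t] at key
  omega

theorem sum_ungrowEntry_col (t : Fin n) : ∑ i ∈ range n, ungrowEntry c d n i t = w' t := by
  have key := sum_col_add_sum_grow_of_lt (A := ungrowEntry c d n) t.isLt n
  rw [grow_ungrowEntry_of_isStripChain hc hd hcd le_rfl t.isLt.le,
    grow_ungrowEntry_of_isStripChain hc hd hcd le_rfl t.isLt, ungrow_of_le_left le_rfl,
    ungrow_of_le_left le_rfl, hd.size t] at key
  omega

theorem rowChain_extendByZero_ungrowEntry :
    rowChain (extendByZero (Matrix.of fun i j : Fin n => ungrowEntry c d n i j)) n = c := by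
  funext t
  rw [rowChain, grow_extendByZero_of _ (min_le_right t n) le_rfl,
    grow_ungrowEntry_of_isStripChain hc hd hcd (min_le_right t n) le_rfl,
    ungrow_right hcd (min_le_right t n), hc.eq_min]

theorem colChain_extendByZero_ungrowEntry :
    colChain (extendByZero (Matrix.of fun i j : Fin n => ungrowEntry c d n i j)) n = d := by
  funext t
  rw [colChain, grow_extendByZero_of _ le_rfl (min_le_right t n),
    grow_ungrowEntry_of_isStripChain hc hd hcd le_rfl (min_le_right t n),
    ungrow_of_le_left le_rfl, hd.eq_min]

end MatrixChains

def matrixEquivStripChains (n : ℕ) (lam mu : Fin n → ℕ) :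
    {A : Matrix (Fin n) (Fin n) ℕ // (∀ i, ∑ j, A i j = lam i) ∧ (∀ j, ∑ i, A i j = mu j)} ≃
    {cd : (ℕ → ℕ → ℕ) × (ℕ → ℕ → ℕ) //
      IsStripChain n lam cd.1 ∧ IsStripChain n mu cd.2 ∧ cd.1 n = cd.2 n} where
  toFun A := ⟨(rowChain (extendByZero A.1) n, colChain (extendByZero A.1) n),
    isStripChain_rowChain fun t => by rw [sum_extendByZero_row, A.2.1],
    isStripChain_colChain fun t => by rw [sum_extendByZero_col, A.2.2],
    by simp only [rowChain, colChain, min_self]⟩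
  invFun cd := ⟨Matrix.of fun i j => ungrowEntry cd.1.1 cd.1.2 n i j,
    fun i => by
      simpa only [Matrix.of_apply, Fin.sum_univ_eq_sum_range (ungrowEntry cd.1.1 cd.1.2 n i)] using
        sum_ungrowEntry_row cd.2.1 cd.2.2.1 cd.2.2.2 i,
    fun j => by
      simpa only [Matrix.of_apply, Fin.sum_univ_eq_sum_range (ungrowEntry cd.1.1 cd.1.2 n · j)]
        using sum_ungrowEntry_col cd.2.1 cd.2.2.1 cd.2.2.2 j⟩
  left_inv A := by
    ext i j
    simp [ungrowEntry_rowChain_colChain _ i.isLt j.isLt]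
  right_inv cd := by
    obtain ⟨⟨c, d⟩, hc, hd, hcd⟩ := cd
    ext1
    exact Prod.ext (rowChain_extendByZero_ungrowEntry hc hd hcd)
      (colChain_extendByZero_ungrowEntry hc hd hcd)

/-! ### Strip chains and semistandard tableaux -/

theorem lt_card_filter_range_iff {L j : ℕ} {P : ℕ → Prop} [DecidablePred P]
    (hP : ∀ j₁ j₂, j₁ ≤ j₂ → j₂ < L → P j₂ → P j₁) :
    j < #{j ∈ range L | P j} ↔ j < L ∧ P j := by
  constructor
  · intro hj
    by_contra h
    have : {j ∈ range L | P j} ⊆ range j := fun j' hj' => by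
      simp only [mem_filter, mem_range] at hj' ⊢
      by_contra hjj
      exact h ⟨by omega, hP j j' (by omega) hj'.1 hj'.2⟩
    have := card_le_card this
    simp only [card_range] at this
    omega
  · rintro ⟨hjL, hPj⟩
    have : range (j + 1) ⊆ {j ∈ range L | P j} := fun j' hj' => by
      simp only [mem_filter, mem_range] at hj' ⊢
      exact ⟨by omega, hP j' j (by omega) hjL hPj⟩
    simpa using card_le_card this

theorem card_filter_cells {D : YoungDiagram} {n : ℕ} (hD : D.colLen 0 ≤ n)
    (P : ℕ → ℕ → Prop) [∀ i j, Decidable (P i j)] :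
    #{x ∈ D.cells | P x.1 x.2} = ∑ i ∈ range n, #{j ∈ range (D.rowLen i) | P i j} := by
  rw [card_eq_sum_card_fiberwise (f := Prod.fst) (t := range n)]
  · refine sum_congr rfl fun i _ => card_nbij' Prod.snd (fun j => (i, j)) ?_ ?_ ?_ ?_
    · rintro ⟨i', j⟩ h
      simp only [coe_filter, Set.mem_ofPred_eq] at h
      obtain ⟨h, rfl⟩ := h
      simpa [YoungDiagram.mem_iff_lt_rowLen] using h
    · intro j h
      simp_all [YoungDiagram.mem_iff_lt_rowLen]
    · rintro ⟨i', j⟩ h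
      simp_all
    · intro j _
      rfl
  · rintro ⟨i, j⟩ h
    simp only [coe_filter, Set.mem_ofPred_eq, YoungDiagram.mem_cells] at h
    have := D.colLen_anti 0 j (Nat.zero_le j)
    have := YoungDiagram.mem_iff_lt_colLen.mp h.1
    simp only [coe_range, Set.mem_Iio]
    omega

theorem card_eq_sum_card_filter_eq {D : YoungDiagram} {n : ℕ} (T : ℕ → ℕ → ℕ)
    (hT : ∀ x ∈ D.cells, T x.1 x.2 < n) :
    D.card = ∑ v : Fin n, #{x ∈ D.cells | T x.1 x.2 = v} := by
  rw [YoungDiagram.card, card_eq_sum_card_fiberwise (f := fun x => T x.1 x.2) (t := range n)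
    fun x hx => mem_range.mpr (hT x hx),
    Fin.sum_univ_eq_sum_range (fun v => #{x ∈ D.cells | T x.1 x.2 = v})]

theorem rowLen_eq_of_mem_iff {D : YoungDiagram} {i m : ℕ} (h : ∀ j, (i, j) ∈ D ↔ j < m) :
    D.rowLen i = m :=
  eq_of_forall_lt_iff fun j => by rw [← YoungDiagram.mem_iff_lt_rowLen, h]

def diagramOf (f : ℕ → ℕ) (hf : Antitone f) (n : ℕ) : YoungDiagram where
  cells := {x ∈ range n ×ˢ range (f 0) | x.2 < f x.1}
  isLowerSet := by
    rintro ⟨i₂, j₂⟩ ⟨i₁, j₁⟩ ⟨hi, hj⟩ h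
    simp only [coe_filter, mem_product, mem_range, Set.mem_ofPred_eq] at hi hj h ⊢
    have := hf hi
    have := hf (Nat.zero_le i₁)
    omega

theorem mem_diagramOf {f : ℕ → ℕ} {hf : Antitone f} {n : ℕ} (hn : VanishesFrom n f) {i j : ℕ} :
    (i, j) ∈ diagramOf f hf n ↔ j < f i := by
  rw [← YoungDiagram.mem_cells]
  simp only [diagramOf, mem_filter, mem_product, mem_range]
  refine ⟨fun h => h.2, fun h => ⟨⟨?_, h.trans_le (hf (Nat.zero_le i))⟩, h⟩⟩
  by_contra hi
  rw [hn i (by omega)] at h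
  omega

-- The entry in cell `(i, j)` is the `v` with `c v i ≤ j < c (v + 1) i`.
def chainEntry (c : ℕ → ℕ → ℕ) (n i j : ℕ) : ℕ := #{t ∈ range n | c (t + 1) i ≤ j}

theorem IsStripChain.chainEntry_lt_iff {n : ℕ} {w : Fin n → ℕ} {c : ℕ → ℕ → ℕ}
    (hc : IsStripChain n w c) {i j t : ℕ} (ht : t ≤ n) : chainEntry c n i j < t ↔ j < c t i := by
  constructor
  · intro h
    by_contra hj
    have : range t ⊆ {s ∈ range n | c (s + 1) i ≤ j} := fun s hs => by
      simp only [mem_range, mem_filter] at hs ⊢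
      exact ⟨by omega, (hc.monotone (show s + 1 ≤ t by omega) i).trans (not_lt.mp hj)⟩
    have := card_le_card this
    simp only [card_range] at this
    exact absurd h (not_lt.mpr this)
  · intro hj
    have ht0 : t ≠ 0 := by
      rintro rfl
      simp [hc.zero] at hj
    have : {s ∈ range n | c (s + 1) i ≤ j} ⊆ range (t - 1) := fun s hs => by
      simp only [mem_range, mem_filter] at hs ⊢
      by_contra hst
      have : c t i ≤ c (s + 1) i := hc.monotone (show t ≤ s + 1 by omega) i
      omega
    have := card_le_card this
    simp only [card_range] at this
    exact lt_of_le_of_lt this (by omega)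

section ChainTableau

variable {n : ℕ} {w : Fin n → ℕ} {c : ℕ → ℕ → ℕ} (hc : IsStripChain n w c)
  {D : YoungDiagram} (hD : ∀ i j, (i, j) ∈ D ↔ j < c n i)

def chainTableau : SemistandardYoungTableau D where
  entry i j := if (i, j) ∈ D then chainEntry c n i j else 0
  row_weak' {i j₁ j₂} hj h := by
    rw [if_pos h, if_pos (D.up_left_mem le_rfl hj.le h)]
    exact card_le_card fun t ht => by
      simp only [mem_filter] at ht ⊢
      exact ⟨ht.1, by omega⟩
  col_strict' {i₁ i₂ j} hi h := by
    rw [if_pos h, if_pos (D.up_left_mem hi.le le_rfl h)]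
    set v := chainEntry c n i₂ j
    have hv : v < n := (hc.chainEntry_lt_iff le_rfl).mpr ((hD i₂ j).mp h)
    have hj : j < c (v + 1) i₂ := (hc.chainEntry_lt_iff hv).mp (Nat.lt_add_one v)
    have hstrip : c (v + 1) i₂ ≤ c v i₁ := by
      have := (hc.isHorizontalStrip v).succ_le (i₂ - 1)
      rw [Nat.sub_add_cancel (by omega)] at this
      exact this.trans (hc.antitone v (by omega))
    exact (hc.chainEntry_lt_iff hv.le).mpr (by omega)
  zeros' h := if_neg h

theorem chainTableau_apply {i j : ℕ} (h : (i, j) ∈ D) :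
    chainTableau hc hD i j = chainEntry c n i j :=
  if_pos h

include hc hD

theorem chainTableau_lt {x : ℕ × ℕ} (hx : x ∈ D.cells) : chainTableau hc hD x.1 x.2 < n := by
  rw [YoungDiagram.mem_cells] at hx
  rw [chainTableau_apply hc hD hx]
  exact (hc.chainEntry_lt_iff le_rfl).mpr ((hD _ _).mp hx)

theorem colLen_le_of_isStripChain : D.colLen 0 ≤ n := by
  by_contra h
  have := (hD n 0).mp (YoungDiagram.mem_iff_lt_colLen.mpr (not_le.mp h))
  rw [hc.vanishesFrom_self n n le_rfl] at this
  omega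

theorem card_filter_chainTableau_eq (v : Fin n) :
    #{x ∈ D.cells | chainTableau hc hD x.1 x.2 = v} = w v := by
  have hrow : ∀ i, #{j ∈ range (D.rowLen i) | chainTableau hc hD i j = v}
      = c (v + 1) i - c v i := by
    intro i
    rw [rowLen_eq_of_mem_iff (hD i), ← Nat.card_Ico]
    congr 1
    ext j
    simp only [mem_filter, mem_range, mem_Ico]
    have h₁ := hc.chainEntry_lt_iff (i := i) (j := j) v.isLt.le
    have h₂ := hc.chainEntry_lt_iff (i := i) (j := j) (Nat.add_one_le_of_lt v.isLt)
    have hmono : c (v + 1) i ≤ c n i := hc.monotone (Nat.add_one_le_of_lt v.isLt) i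
    constructor
    · rintro ⟨hj, he⟩
      rw [chainTableau_apply hc hD ((hD i j).mpr hj)] at he
      omega
    · rintro ⟨hj₁, hj₂⟩
      have hj : j < c n i := by omega
      rw [chainTableau_apply hc hD ((hD i j).mpr hj)]
      omega
  rw [card_filter_cells (colLen_le_of_isStripChain hc hD) (fun i j => chainTableau hc hD i j = v),
    sum_congr rfl fun i _ => hrow i,
    sum_tsub_distrib _ fun i _ => hc.monotone (Nat.le_add_right (v : ℕ) 1) i, hc.size v]
  omega

end ChainTableau

section TableauChain

variable {μ : YoungDiagram} (T : SemistandardYoungTableau μ)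

def tableauChain (t i : ℕ) : ℕ := #{j ∈ range (μ.rowLen i) | T i j < t}

theorem lt_tableauChain_iff {t i j : ℕ} : j < tableauChain T t i ↔ (i, j) ∈ μ ∧ T i j < t := by
  rw [tableauChain, lt_card_filter_range_iff, YoungDiagram.mem_iff_lt_rowLen]
  intro j₁ j₂ hj hj₂ h
  exact (T.row_weak_of_le hj (YoungDiagram.mem_iff_lt_rowLen.mpr hj₂)).trans_lt h

variable {T} {n : ℕ} (hT : ∀ x ∈ μ.cells, T x.1 x.2 < n)
include hT

theorem tableauChain_of_le {t : ℕ} (ht : n ≤ t) : tableauChain T t = μ.rowLen :=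
  funext fun i => eq_of_forall_lt_iff fun j => by
    rw [lt_tableauChain_iff, ← YoungDiagram.mem_iff_lt_rowLen]
    exact and_iff_left_of_imp fun h => (hT (i, j) h).trans_le ht

theorem mem_iff_lt_tableauChain {i j : ℕ} : (i, j) ∈ μ ↔ j < tableauChain T n i := by
  rw [tableauChain_of_le hT le_rfl, YoungDiagram.mem_iff_lt_rowLen]

theorem isStripChain_tableauChain (hμ : μ.colLen 0 ≤ n) {w : Fin n → ℕ}
    (hw : ∀ v : Fin n, #{x ∈ μ.cells | T x.1 x.2 = v} = w v) :
    IsStripChain n w (tableauChain T) where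
  zero := by
    funext i
    simp [tableauChain]
  strip t _ := by
    constructor
    · intro k
      refine le_of_forall_lt fun j hj => ?_
      rw [lt_tableauChain_iff] at hj ⊢
      exact ⟨hj.1, by omega⟩
    · intro k
      refine le_of_forall_lt fun j hj => ?_
      rw [lt_tableauChain_iff] at hj ⊢
      have := T.col_strict (Nat.lt_add_one k) hj.1
      exact ⟨μ.up_left_mem (Nat.le_add_right k 1) le_rfl hj.1, by omega⟩
  size t := by
    rw [← hw, card_filter_cells hμ (fun i j => T i j = t), ← sum_add_distrib]
    refine sum_congr rfl fun i _ => ?_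
    rw [tableauChain, tableauChain,
      ← card_union_of_disjoint (disjoint_filter.mpr fun j _ h => by omega), ← filter_or]
    exact congrArg card (filter_congr fun j _ => by omega)
  const t ht := by rw [tableauChain_of_le hT ht, tableauChain_of_le hT le_rfl]

end TableauChain

theorem tableauChain_chainTableau {n : ℕ} {w : Fin n → ℕ} {c : ℕ → ℕ → ℕ} (hc : IsStripChain n w c)
    {D : YoungDiagram} (hD : ∀ i j, (i, j) ∈ D ↔ j < c n i) :
    tableauChain (chainTableau hc hD) = c := by
  funext t i
  refine eq_of_forall_lt_iff fun j => ?_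
  rw [lt_tableauChain_iff]
  constructor
  · rintro ⟨h, he⟩
    rw [chainTableau_apply hc hD h] at he
    rcases le_total t n with ht | ht
    · exact (hc.chainEntry_lt_iff ht).mp he
    · rw [hc.const t ht]
      exact (hD i j).mp h
  · intro hj
    rcases le_total t n with ht | ht
    · have h := (hD i j).mpr (hj.trans_le (hc.monotone ht i))
      rw [chainTableau_apply hc hD h]
      exact ⟨h, (hc.chainEntry_lt_iff ht).mpr hj⟩
    · rw [hc.const t ht] at hj
      have h := (hD i j).mpr hj
      rw [chainTableau_apply hc hD h]
      exact ⟨h, ((hc.chainEntry_lt_iff le_rfl).mpr hj).trans_le ht⟩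

theorem chainTableau_tableauChain_apply {μ : YoungDiagram} {T : SemistandardYoungTableau μ} {n : ℕ}
    {w : Fin n → ℕ} (hc : IsStripChain n w (tableauChain T)) (hT : ∀ x ∈ μ.cells, T x.1 x.2 < n)
    {D : YoungDiagram} (hD : ∀ i j, (i, j) ∈ D ↔ j < tableauChain T n i) (i j : ℕ) :
    chainTableau hc hD i j = T i j := by
  by_cases h : (i, j) ∈ μ
  · have hv : T i j < n := hT (i, j) h
    rw [chainTableau_apply hc hD ((hD i j).mpr ((mem_iff_lt_tableauChain hT).mp h))]
    refine le_antisymm (Nat.lt_add_one_iff.mp ?_) (not_lt.mp fun hlt => ?_)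
    · exact (hc.chainEntry_lt_iff hv).mpr ((lt_tableauChain_iff T).mpr ⟨h, Nat.lt_add_one _⟩)
    · exact lt_irrefl _ ((lt_tableauChain_iff T).mp ((hc.chainEntry_lt_iff hv.le).mp hlt)).2
  · rw [T.zeros h, (chainTableau hc hD).zeros fun h' =>
      h ((mem_iff_lt_tableauChain hT).mpr ((hD i j).mp h'))]

theorem sigma_mk_eq_of_apply_eq {D E : YoungDiagram} (h : D = E) {S T : SemistandardYoungTableau D}
    {S' T' : SemistandardYoungTableau E} (hS : ∀ i j, S i j = S' i j) (hT : ∀ i j, T i j = T' i j) :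
    (⟨D, S, T⟩ : Σ ν : YoungDiagram, SemistandardYoungTableau ν × SemistandardYoungTableau ν)
      = ⟨E, S', T'⟩ := by
  subst h
  rw [SemistandardYoungTableau.ext hS, SemistandardYoungTableau.ext hT]

section ChainShape

variable {n : ℕ} {w w' : Fin n → ℕ} {c d : ℕ → ℕ → ℕ} (hc : IsStripChain n w c)

def chainShape : YoungDiagram := diagramOf (c n) hc.antitone_self n

theorem mem_chainShape (i j : ℕ) : (i, j) ∈ chainShape hc ↔ j < c n i :=
  mem_diagramOf (hc.vanishesFrom_self n)

theorem mem_chainShape_of_eq (hcd : c n = d n) (i j : ℕ) : (i, j) ∈ chainShape hc ↔ j < d n i := by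
  rw [← hcd]
  exact mem_chainShape hc i j

theorem card_chainShape : (chainShape hc).card = ∑ v, w v := by
  rw [card_eq_sum_card_filter_eq _ fun x hx => chainTableau_lt hc (mem_chainShape hc) hx]
  exact sum_congr rfl fun v _ => card_filter_chainTableau_eq hc (mem_chainShape hc) v

end ChainShape

def stripChainsEquivTableaux (n r : ℕ) (lam mu : Fin n → ℕ) (hlam : ∑ i, lam i = r) :
    {cd : (ℕ → ℕ → ℕ) × (ℕ → ℕ → ℕ) //
      IsStripChain n lam cd.1 ∧ IsStripChain n mu cd.2 ∧ cd.1 n = cd.2 n} ≃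
    {p : Σ ν : YoungDiagram, SemistandardYoungTableau ν × SemistandardYoungTableau ν //
      p.1.card = r ∧ p.1.colLen 0 ≤ n ∧
      (∀ c ∈ p.1.cells, p.2.1 c.1 c.2 < n) ∧ (∀ c ∈ p.1.cells, p.2.2 c.1 c.2 < n) ∧
      (∀ v : Fin n, #{c ∈ p.1.cells | p.2.1 c.1 c.2 = v} = lam v) ∧
      (∀ v : Fin n, #{c ∈ p.1.cells | p.2.2 c.1 c.2 = v} = mu v)} where
  toFun cd :=
    have hD := mem_chainShape cd.2.1
    have hD' := mem_chainShape_of_eq cd.2.1 cd.2.2.2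
    ⟨⟨chainShape cd.2.1, chainTableau cd.2.1 hD, chainTableau cd.2.2.1 hD'⟩,
      (card_chainShape cd.2.1).trans hlam, colLen_le_of_isStripChain cd.2.1 hD,
      fun _ => chainTableau_lt cd.2.1 hD, fun _ => chainTableau_lt cd.2.2.1 hD',
      card_filter_chainTableau_eq cd.2.1 hD, card_filter_chainTableau_eq cd.2.2.1 hD'⟩
  invFun p :=
    let ⟨⟨ν, S, T⟩, _, hcol, hS, hT, hwS, hwT⟩ := p
    ⟨(tableauChain S, tableauChain T), isStripChain_tableauChain hS hcol hwS,
      isStripChain_tableauChain hT hcol hwT,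
      (tableauChain_of_le hS le_rfl).trans (tableauChain_of_le hT le_rfl).symm⟩
  left_inv := by
    rintro ⟨⟨c, d⟩, hc, hd, hcd⟩
    exact Subtype.ext (Prod.ext (tableauChain_chainTableau hc (mem_chainShape hc))
      (tableauChain_chainTableau hd (mem_chainShape_of_eq hc hcd)))
  right_inv := by
    rintro ⟨⟨ν, S, T⟩, _, hcol, hS, hT, hwS, hwT⟩
    have hc := isStripChain_tableauChain hS hcol hwS
    refine Subtype.ext (sigma_mk_eq_of_apply_eq ?_
      (chainTableau_tableauChain_apply hc hS (mem_chainShape hc))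
      (chainTableau_tableauChain_apply (isStripChain_tableauChain hT hcol hwT) hT
        (mem_chainShape_of_eq hc
          ((tableauChain_of_le hS le_rfl).trans (tableauChain_of_le hT le_rfl).symm))))
    ext ⟨i, j⟩
    rw [YoungDiagram.mem_cells, YoungDiagram.mem_cells, mem_chainShape,
      ← mem_iff_lt_tableauChain hS]

end RSK

theorem card_matrices_eq_card_ssyt_pairs_general (n r : ℕ)
    (lam mu : Fin n → ℕ) (hlam : ∑ i, lam i = r) :
    Nat.card {A : Matrix (Fin n) (Fin n) ℕ //
        (∀ i, ∑ j, A i j = lam i) ∧ (∀ j, ∑ i, A i j = mu j)}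
      = Nat.card {p : Σ ν : YoungDiagram,
            SemistandardYoungTableau ν × SemistandardYoungTableau ν //
          p.1.card = r ∧ p.1.colLen 0 ≤ n ∧
          (∀ c ∈ p.1.cells, p.2.1 c.1 c.2 < n) ∧
          (∀ c ∈ p.1.cells, p.2.2 c.1 c.2 < n) ∧
          (∀ v : Fin n,
            (p.1.cells.filter fun c => p.2.1 c.1 c.2 = (v : ℕ)).card = lam v) ∧
          (∀ v : Fin n,
            (p.1.cells.filter fun c => p.2.2 c.1 c.2 = (v : ℕ)).card = mu v)} :=
  Nat.card_congr ((RSK.matrixEquivStripChains n lam mu).trans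
    (RSK.stripChainsEquivTableaux n r lam mu hlam))

theorem card_matrices_eq_card_ssyt_pairs (n r : ℕ)
    (lam mu : Fin n → ℕ) (hlam : ∑ i, lam i = r) (hmu : ∑ i, mu i = r) :
    Nat.card {A : Matrix (Fin n) (Fin n) ℕ //
        (∀ i, ∑ j, A i j = lam i) ∧ (∀ j, ∑ i, A i j = mu j)}
      = Nat.card {p : Σ ν : YoungDiagram,
            SemistandardYoungTableau ν × SemistandardYoungTableau ν //
          p.1.card = r ∧ p.1.colLen 0 ≤ n ∧
          (∀ c ∈ p.1.cells, p.2.1 c.1 c.2 < n) ∧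
          (∀ c ∈ p.1.cells, p.2.2 c.1 c.2 < n) ∧
          (∀ v : Fin n,
            (p.1.cells.filter fun c => p.2.1 c.1 c.2 = (v : ℕ)).card = lam v) ∧
          (∀ v : Fin n,
            (p.1.cells.filter fun c => p.2.2 c.1 c.2 = (v : ℕ)).card = mu v)} :=
  card_matrices_eq_card_ssyt_pairs_general n r lam mu hlam
end
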